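/- Let m ≥ 3 be an odd integer, let i be a positive integer with gcd(i,m) = 1, set q = 2^i, and let a ∈ 𝔽_{2^m}^*. Then the polynomial S_a(T) = T^{q²+q+1} + a^q T^{q+1} + 1 has a root in 𝔽_{2^m} \ {0} if and only if the polynomial Q_a(T) = T^{q²+q+1} + aT + 1 has a root in 𝔽_{2^m} \ {0}. -/
import Mathlib

open Finset Polynomial

private lemma aux_modeq_gcd (d : ℕ) : ∀ b, ∀ a, (2:ℕ) ^ a ≡ 1 [MOD d] → (2:ℕ) ^ b ≡ 1 [MOD d] →
    (2:ℕ) ^ (Nat.gcd b a) ≡ 1 [MOD d] := by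
  intro b
  induction b using Nat.strong_induction_on with
  | _ b ih =>
    intro a ha hb
    rcases Nat.eq_zero_or_pos b with rfl | hbpos
    · simpa using ha
    · rw [Nat.gcd_rec]
      apply ih (a % b) (Nat.mod_lt _ hbpos) b hb
      calc (2:ℕ) ^ (a % b) = 1 ^ (a / b) * 2 ^ (a % b) := by simp
        _ ≡ ((2:ℕ) ^ b) ^ (a / b) * 2 ^ (a % b) [MOD d] :=
            Nat.ModEq.mul ((hb.pow (a / b)).symm) (Nat.ModEq.refl _)
        _ = 2 ^ a := by rw [← pow_mul, ← pow_add, Nat.div_add_mod]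
        _ ≡ 1 [MOD d] := ha

private lemma aux_coprime (i m : ℕ) (hgcd : Nat.gcd i m = 1) :
    Nat.Coprime (2 ^ m - 1) (2 ^ i - 1) := by
  set d := Nat.gcd (2 ^ m - 1) (2 ^ i - 1) with hd
  have h1 : d ∣ 2 ^ m - 1 := Nat.gcd_dvd_left _ _
  have h2 : d ∣ 2 ^ i - 1 := Nat.gcd_dvd_right _ _
  have ha : (2:ℕ) ^ m ≡ 1 [MOD d] := ((Nat.modEq_iff_dvd' Nat.one_le_two_pow).mpr h1).symm
  have hb : (2:ℕ) ^ i ≡ 1 [MOD d] := ((Nat.modEq_iff_dvd' Nat.one_le_two_pow).mpr h2).symm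
  have := aux_modeq_gcd d i m ha hb
  rw [hgcd] at this
  have hdvd : d ∣ 1 := by
    have h3 : d ∣ 2 ^ 1 - 1 := (Nat.modEq_iff_dvd' Nat.one_le_two_pow).mp this.symm
    simpa using h3
  exact Nat.dvd_one.mp hdvd

private lemma aux_char2 {F : Type*} [Field F] [Fintype F] (m : ℕ) (hm : 0 < m)
    (hF : Fintype.card F = 2 ^ m) : CharP F 2 := by
  have h2 : (2 : F) = 0 := by
    have hc : ((Fintype.card F : ℕ) : F) = 0 := FiniteField.cast_card_eq_zero F
    rw [hF] at hc
    push_cast at hc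
    exact pow_eq_zero_iff hm.ne' |>.mp hc
  haveI := ringChar.charP F
  have hp : (ringChar F).Prime := CharP.char_is_prime F (ringChar F)
  have hdvd : ringChar F ∣ 2 :=
    (CharP.cast_eq_zero_iff F (ringChar F) 2).mp (by exact_mod_cast h2)
  have : ringChar F = 2 := (Nat.prime_dvd_prime_iff_eq hp Nat.prime_two).mp hdvd
  exact this ▸ ringChar.charP F

set_option linter.unusedSectionVars false
section TraceAux
variable {F : Type*} [Field F] [Fintype F]

private def auxTr (m : ℕ) (z : F) : F := ∑ j ∈ Finset.range m, z ^ (2 ^ j)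

private lemma auxTr_add [CharP F 2] (m : ℕ) (x y : F) :
    auxTr m (x + y) = auxTr m x + auxTr m y := by
  haveI : ExpChar F 2 := .prime Nat.prime_two
  unfold auxTr
  rw [← Finset.sum_add_distrib]
  exact Finset.sum_congr rfl fun j _ => add_pow_char_pow ..

private lemma auxTr_zero (m : ℕ) : auxTr m (0 : F) = 0 := by
  unfold auxTr
  exact Finset.sum_eq_zero fun j _ => zero_pow (by positivity)

private lemma aux_pow_card (m : ℕ) (hF : Fintype.card F = 2 ^ m) (z : F) :
    z ^ (2 ^ m) = z := by
  rw [← hF]; exact FiniteField.pow_card z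

private lemma auxTr_sq (m : ℕ) (hF : Fintype.card F = 2 ^ m) (z : F) :
    auxTr m (z ^ 2) = auxTr m z := by
  have h1 : ∀ j : ℕ, (z ^ 2) ^ (2 ^ j) = z ^ (2 ^ (j + 1)) := by
    intro j; rw [← pow_mul, ← pow_succ']
  have h2 := Finset.sum_range_succ' (fun j => z ^ (2 ^ j)) m
  have h3 := Finset.sum_range_succ (fun j => z ^ (2 ^ j)) m
  have h4 : auxTr m (z ^ 2) + z ^ (2 ^ 0) = auxTr m z + z ^ (2 ^ m) := by
    unfold auxTr
    rw [Finset.sum_congr rfl fun j _ => h1 j]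
    rw [← h2, h3]
  rw [aux_pow_card m hF, pow_zero, pow_one] at h4
  exact add_right_cancel h4

private lemma auxTr_frob (m : ℕ) (hF : Fintype.card F = 2 ^ m) (k : ℕ) (z : F) :
    auxTr m (z ^ (2 ^ k)) = auxTr m z := by
  induction k with
  | zero => simp
  | succ k ih =>
    have : z ^ (2 ^ (k + 1)) = (z ^ (2 ^ k)) ^ 2 := by rw [← pow_mul, ← pow_succ]
    rw [this, auxTr_sq m hF, ih]

private lemma auxTr_exists (m : ℕ) (hm : 0 < m) (hF : Fintype.card F = 2 ^ m) :
    ∃ z : F, auxTr m z ≠ 0 := by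
  by_contra h
  push_neg at h
  set P : F[X] := ∑ j ∈ Finset.range m, (X : F[X]) ^ (2 ^ j) with hP
  have heval : ∀ z : F, P.eval z = 0 := by
    intro z
    have : P.eval z = auxTr m z := by
      rw [hP, Polynomial.eval_finset_sum]
      simp [auxTr]
    rw [this]; exact h z
  have hdeg : P.natDegree < Fintype.card F := by
    rw [hF]
    calc P.natDegree ≤ 2 ^ (m - 1) := by
          apply Polynomial.natDegree_sum_le_of_forall_le
          intro j hj
          rw [Polynomial.natDegree_X_pow]
          exact Nat.pow_le_pow_right (by norm_num) (by have := Finset.mem_range.mp hj; omega)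
      _ < 2 ^ m := Nat.pow_lt_pow_right (by norm_num) (by omega)
  have hP0 : P = 0 :=
    Polynomial.eq_zero_of_natDegree_lt_card_of_eval_eq_zero P Function.injective_id heval hdeg
  have hcoeff : P.coeff (2 ^ (m - 1)) = 1 := by
    rw [hP, Polynomial.finset_sum_coeff]
    rw [Finset.sum_eq_single_of_mem (m - 1) (Finset.mem_range.mpr (by omega))]
    · simp [Polynomial.coeff_X_pow]
    · intro j hj hne
      rw [Polynomial.coeff_X_pow, if_neg]
      intro hcontra
      exact hne (Nat.pow_right_injective (le_refl 2) hcontra.symm)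
  rw [hP0] at hcoeff
  simp at hcoeff

private lemma auxTr_nondeg (m : ℕ) (hm : 0 < m) (hF : Fintype.card F = 2 ^ m)
    (x : F) (hx : x ≠ 0) : ∃ w : F, auxTr m (x * w) ≠ 0 := by
  obtain ⟨z, hz⟩ := auxTr_exists m hm hF
  exact ⟨z * x⁻¹, by rwa [show x * (z * x⁻¹) = z by field_simp]⟩

end TraceAux

set_option linter.unusedSectionVars false
section MainAux
variable {F : Type*} [Field F] [Fintype F]

-- Frobenius x ↦ x^(2^k) is bijective
private lemma aux_frob_bij [CharP F 2] (k : ℕ) :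
    Function.Bijective (fun x : F => x ^ (2 ^ k)) := by
  haveI : ExpChar F 2 := .prime Nat.prime_two
  rw [← Finite.injective_iff_bijective]
  intro x y hxy
  simp only at hxy
  have h0 : (x + y) ^ (2 ^ k) = 0 := by
    rw [add_pow_char_pow, hxy, CharTwo.add_self_eq_zero]
  have := pow_eq_zero_iff (n := 2 ^ k) (by positivity) |>.mp h0
  rw [← CharTwo.sub_eq_add] at this
  exact sub_eq_zero.mp this

-- (q-1)-th power surjectivity on nonzero
private lemma aux_qsub1_surj (m i : ℕ) (hF : Fintype.card F = 2 ^ m)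
    (hcop : Nat.Coprime (2 ^ m - 1) (2 ^ i - 1)) (b : F) (hb : b ≠ 0) :
    ∃ y : F, y ≠ 0 ∧ y ^ (2 ^ i - 1) = b := by
  have hcard : Nat.card Fˣ = 2 ^ m - 1 := by
    rw [Nat.card_units, Nat.card_eq_fintype_card, hF]
  have hcop' : (Nat.card Fˣ).Coprime (2 ^ i - 1) := by rw [hcard]; exact hcop
  obtain ⟨v, hv⟩ := (powCoprime hcop').surjective (Units.mk0 b hb)
  refine ⟨(v : F), v.ne_zero, ?_⟩
  have := congrArg Units.val hv
  simpa [powCoprime] using this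
end MainAux

set_option linter.unusedSectionVars false
section Main2
variable {F : Type*} [Field F] [Fintype F]

private lemma aux_lin (i q : ℕ) (hq : q = 2 ^ i)
    (hsur : ∀ b : F, b ≠ 0 → ∃ y : F, y ≠ 0 ∧ y ^ (q - 1) = b)
    (e E' : ℕ) (hE : (q - 1) * e + 1 = E') (b : F) :
    (∃ t : F, t ≠ 0 ∧ t ^ (q ^ 2 + q + 1) + b * t ^ e + 1 = 0) ↔
    (∃ y : F, y ≠ 0 ∧ y ^ (q ^ 3) + b * y ^ E' + y = 0) := by
  have hq1 : 1 ≤ q := by rw [hq]; exact Nat.one_le_two_pow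
  have hcube : (q - 1) * (q ^ 2 + q + 1) + 1 = q ^ 3 := by
    obtain ⟨k, rfl⟩ : ∃ k, q = k + 1 := ⟨q - 1, by omega⟩
    simp only [Nat.add_sub_cancel]; ring
  have key : ∀ y : F,
      y * ((y ^ (q - 1)) ^ (q ^ 2 + q + 1) + b * (y ^ (q - 1)) ^ e + 1)
        = y ^ (q ^ 3) + b * y ^ E' + y := by
    intro y
    rw [← pow_mul, ← pow_mul]
    calc y * (y ^ ((q - 1) * (q ^ 2 + q + 1)) + b * y ^ ((q - 1) * e) + 1)
        = y ^ ((q - 1) * (q ^ 2 + q + 1) + 1) + b * y ^ ((q - 1) * e + 1) + y := by ring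
      _ = y ^ (q ^ 3) + b * y ^ E' + y := by rw [hcube, hE]
  constructor
  · rintro ⟨t, ht0, ht⟩
    obtain ⟨y, hy0, hyt⟩ := hsur t ht0
    refine ⟨y, hy0, ?_⟩
    rw [← key y, hyt, ht, mul_zero]
  · rintro ⟨y, hy0, hy⟩
    refine ⟨y ^ (q - 1), pow_ne_zero _ hy0, ?_⟩
    have := key y
    rw [hy] at this
    rcases mul_eq_zero.mp this with h | h
    · exact absurd h hy0
    · exact h

private lemma aux_twist (i q : ℕ) (hq : q = 2 ^ i) [CharP F 2] (b : F) :
    (∃ y : F, y ≠ 0 ∧ y ^ (q ^ 3) + b * y ^ (q ^ 2) + y = 0) ↔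
    (∃ y : F, y ≠ 0 ∧ y ^ (q ^ 3) + b ^ q * y ^ (q ^ 2) + y = 0) := by
  haveI : ExpChar F 2 := .prime Nat.prime_two
  have hqpos : 0 < q := by rw [hq]; positivity
  have key : ∀ y : F, (y ^ (q ^ 3) + b * y ^ (q ^ 2) + y) ^ q
      = (y ^ q) ^ (q ^ 3) + b ^ q * (y ^ q) ^ (q ^ 2) + y ^ q := by
    intro y
    subst hq
    rw [add_pow_char_pow, add_pow_char_pow, mul_pow]
    rw [pow_right_comm y _ (2 ^ i), pow_right_comm y _ (2 ^ i)]
  constructor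
  · rintro ⟨y, hy0, hy⟩
    refine ⟨y ^ q, pow_ne_zero _ hy0, ?_⟩
    rw [← key, hy, zero_pow hqpos.ne']
  · rintro ⟨z, hz0, hz⟩
    obtain ⟨y, hy⟩ := (aux_frob_bij (F := F) i).surjective z
    simp only at hy
    rw [← hq] at hy
    have hy0 : y ≠ 0 := by
      intro hc; apply hz0; rw [← hy, hc, zero_pow hqpos.ne']
    refine ⟨y, hy0, ?_⟩
    have h0 : (y ^ (q ^ 3) + b * y ^ (q ^ 2) + y) ^ q = 0 := by
      rw [key, hy, hz]
    exact pow_eq_zero_iff hqpos.ne' |>.mp h0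

private lemma aux_dual (m i q : ℕ) (hm : 0 < m) (hF : Fintype.card F = 2 ^ m)
    (hq : q = 2 ^ i) [CharP F 2] (a : F) :
    (∃ x : F, x ≠ 0 ∧ x ^ (q ^ 3) + a ^ (q ^ 2) * x ^ (q ^ 2) + x = 0) ↔
    (∃ y : F, y ≠ 0 ∧ y ^ (q ^ 3) + a * y ^ q + y = 0) := by
  haveI : ExpChar F 2 := .prime Nat.prime_two
  have hq3 : q ^ 3 = 2 ^ (i * 3) := by rw [hq, ← pow_mul]
  have hq2 : q ^ 2 = 2 ^ (i * 2) := by rw [hq, ← pow_mul]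
  have key : ∀ x y : F,
      auxTr m ((x ^ (q ^ 3) + a ^ (q ^ 2) * x ^ (q ^ 2) + x) * y ^ (q ^ 3))
        = auxTr m (x * (y ^ (q ^ 3) + a * y ^ q + y)) := by
    intro x y
    have e1 : auxTr m (x ^ (q ^ 3) * y ^ (q ^ 3)) = auxTr m (x * y) := by
      rw [← mul_pow, hq3, auxTr_frob m hF]
    have e2 : auxTr m (a ^ (q ^ 2) * x ^ (q ^ 2) * y ^ (q ^ 3)) = auxTr m (a * x * y ^ q) := by
      have h : a ^ (q ^ 2) * x ^ (q ^ 2) * y ^ (q ^ 3) = (a * x * y ^ q) ^ (q ^ 2) := by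
        rw [mul_pow, mul_pow, ← pow_mul]
        have : q * q ^ 2 = q ^ 3 := by ring
        rw [this]
      rw [h, hq2, auxTr_frob m hF]
    calc auxTr m ((x ^ (q ^ 3) + a ^ (q ^ 2) * x ^ (q ^ 2) + x) * y ^ (q ^ 3))
        = auxTr m (x ^ (q ^ 3) * y ^ (q ^ 3)) + auxTr m (a ^ (q ^ 2) * x ^ (q ^ 2) * y ^ (q ^ 3))
            + auxTr m (x * y ^ (q ^ 3)) := by
          rw [show (x ^ (q ^ 3) + a ^ (q ^ 2) * x ^ (q ^ 2) + x) * y ^ (q ^ 3)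
              = (x ^ (q ^ 3) * y ^ (q ^ 3) + a ^ (q ^ 2) * x ^ (q ^ 2) * y ^ (q ^ 3))
                + x * y ^ (q ^ 3) by ring, auxTr_add, auxTr_add]
      _ = auxTr m (x * y) + auxTr m (a * x * y ^ q) + auxTr m (x * y ^ (q ^ 3)) := by
          rw [e1, e2]
      _ = auxTr m (x * (y ^ (q ^ 3) + a * y ^ q + y)) := by
          rw [show x * (y ^ (q ^ 3) + a * y ^ q + y)
              = (x * y ^ (q ^ 3) + a * x * y ^ q) + x * y by ring, auxTr_add, auxTr_add]
          ring
  have addB : ∀ y1 y2 : F, ((y1 + y2) ^ (q ^ 3) + a * (y1 + y2) ^ q + (y1 + y2))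
      = (y1 ^ (q ^ 3) + a * y1 ^ q + y1) + (y2 ^ (q ^ 3) + a * y2 ^ q + y2) := by
    intro y1 y2
    have h3 : (y1 + y2) ^ (q ^ 3) = y1 ^ (q ^ 3) + y2 ^ (q ^ 3) := by
      rw [hq3]; exact add_pow_char_pow ..
    have h1 : (y1 + y2) ^ q = y1 ^ q + y2 ^ q := by
      rw [hq]; exact add_pow_char_pow ..
    rw [h3, h1]; ring
  have addC : ∀ x1 x2 : F, ((x1 + x2) ^ (q ^ 3) + a ^ (q ^ 2) * (x1 + x2) ^ (q ^ 2) + (x1 + x2))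
      = (x1 ^ (q ^ 3) + a ^ (q ^ 2) * x1 ^ (q ^ 2) + x1)
        + (x2 ^ (q ^ 3) + a ^ (q ^ 2) * x2 ^ (q ^ 2) + x2) := by
    intro x1 x2
    have h3 : (x1 + x2) ^ (q ^ 3) = x1 ^ (q ^ 3) + x2 ^ (q ^ 3) := by
      rw [hq3]; exact add_pow_char_pow ..
    have h2 : (x1 + x2) ^ (q ^ 2) = x1 ^ (q ^ 2) + x2 ^ (q ^ 2) := by
      rw [hq2]; exact add_pow_char_pow ..
    rw [h3, h2]; ring
  constructor
  · rintro ⟨x, hx0, hxC⟩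
    by_contra hno
    push_neg at hno
    have Binj : Function.Injective (fun y : F => y ^ (q ^ 3) + a * y ^ q + y) := by
      intro y1 y2 h12
      simp only at h12
      have h0 : (y1 + y2) ^ (q ^ 3) + a * (y1 + y2) ^ q + (y1 + y2) = 0 := by
        rw [addB, h12, CharTwo.add_self_eq_zero]
      by_contra hne
      have hy12 : y1 + y2 ≠ 0 := by
        intro hc; apply hne
        rw [← CharTwo.sub_eq_add] at hc; exact sub_eq_zero.mp hc
      exact hno (y1 + y2) hy12 h0
    have Bsurj := Finite.injective_iff_surjective.mp Binj
    obtain ⟨w, hw⟩ := auxTr_nondeg m hm hF x hx0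
    obtain ⟨y, hy⟩ := Bsurj w
    simp only at hy
    apply hw
    rw [← hy, ← key, hxC, zero_mul, auxTr_zero]
  · rintro ⟨y, hy0, hyB⟩
    by_contra hno
    push_neg at hno
    have Cinj : Function.Injective
        (fun x : F => x ^ (q ^ 3) + a ^ (q ^ 2) * x ^ (q ^ 2) + x) := by
      intro x1 x2 h12
      simp only at h12
      have h0 : (x1 + x2) ^ (q ^ 3) + a ^ (q ^ 2) * (x1 + x2) ^ (q ^ 2) + (x1 + x2) = 0 := by
        rw [addC, h12, CharTwo.add_self_eq_zero]
      by_contra hne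
      have hx12 : x1 + x2 ≠ 0 := by
        intro hc; apply hne
        rw [← CharTwo.sub_eq_add] at hc; exact sub_eq_zero.mp hc
      exact hno (x1 + x2) hx12 h0
    have Csurj := Finite.injective_iff_surjective.mp Cinj
    obtain ⟨w, hw⟩ := auxTr_nondeg m hm hF (y ^ (q ^ 3)) (pow_ne_zero _ hy0)
    obtain ⟨x, hx⟩ := Csurj w
    simp only at hx
    apply hw
    rw [show y ^ (q ^ 3) * w = w * y ^ (q ^ 3) by ring, ← hx, key, hyB, mul_zero, auxTr_zero]

end Main2

theorem stmt_3 (m i : ℕ) (hm : 3 ≤ m) (hmodd : Odd m) (hi : 0 < i)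
    (hgcd : Nat.gcd i m = 1) (q : ℕ) (hq : q = 2 ^ i)
    (F : Type*) [Field F] [Fintype F] (hF : Fintype.card F = 2 ^ m)
    (a : F) (ha : a ≠ 0) :
    (∃ t : F, t ≠ 0 ∧ t ^ (q ^ 2 + q + 1) + a ^ q * t ^ (q + 1) + 1 = 0) ↔
    (∃ t : F, t ≠ 0 ∧ t ^ (q ^ 2 + q + 1) + a * t + 1 = 0) := by
  have hm0 : 0 < m := by omega
  haveI : CharP F 2 := aux_char2 m hm0 hF
  have hq1 : 1 ≤ q := by rw [hq]; exact Nat.one_le_two_pow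
  have hcop := aux_coprime i m hgcd
  have hsur : ∀ b : F, b ≠ 0 → ∃ y : F, y ≠ 0 ∧ y ^ (q - 1) = b := by
    intro b hb
    obtain ⟨y, hy0, hy⟩ := aux_qsub1_surj m i hF hcop b hb
    exact ⟨y, hy0, by rwa [hq]⟩
  have hsq : (q - 1) * (q + 1) + 1 = q ^ 2 := by
    obtain ⟨k, rfl⟩ : ∃ k, q = k + 1 := ⟨q - 1, by omega⟩
    simp only [Nat.add_sub_cancel]; ring
  have hone : (q - 1) * 1 + 1 = q := by omega
  have step1 := aux_lin (F := F) i q hq hsur (q + 1) (q ^ 2) hsq (a ^ q)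
  have step4 := aux_lin (F := F) i q hq hsur 1 q hone a
  have step2 := aux_twist (F := F) i q hq (a ^ q)
  have hqq : (a ^ q) ^ q = a ^ (q ^ 2) := by rw [← pow_mul, ← pow_two]
  rw [hqq] at step2
  have step3 := aux_dual (F := F) m i q hm0 hF hq a
  simp only [pow_one] at step4
  rw [step1, step2, step3, step4]
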